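/- arXiv:1403.1741 — 2 statements merged into one kernel-verified Lean document; each statement's English description precedes it below -/
import Mathlib

section
/- Let T ≤ P be type D Schubert symbols in [1,N], N = 2n+2, with T ⪯ P in the type D Bruhat order. If c ∈ L_{P,T}, then both c and c−1 belong to the cut set C_{P,T} (which includes exceptional cuts). -/
open scoped Classical

/-- `p : ℕ → ℕ` encodes a Schubert symbol `{p 1 < … < p m} ⊆ [1,N]`
with the conventions `p 0 = 0` and `p (m+1) = N+1`, and the isotropic
condition that no two elements sum to `N+1`. -/
structure IsSSym (N m : ℕ) (p : ℕ → ℕ) : Prop where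
  zero : p 0 = 0
  top : p (m+1) = N+1
  mono : ∀ i j, i < j → j ≤ m+1 → p i < p j
  ub : ∀ i, 1 ≤ i → i ≤ m → p i ≤ N
  iso : ∀ i j, 1 ≤ i → i ≤ m → 1 ≤ j → j ≤ m → p i + p j ≠ N+1

/-- The underlying set `{p 1, …, p m}` of a Schubert symbol. -/
def symSet (m : ℕ) (p : ℕ → ℕ) : Finset ℕ := (Finset.Icc 1 m).image p

/-- Componentwise order `t_i ≤ p_i` on Schubert symbols. -/
def leS (m : ℕ) (t p : ℕ → ℕ) : Prop := ∀ i, 1 ≤ i → i ≤ m → t i ≤ p i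

/-- `c` is a visible cut of the Richardson diagram `D(P,T)`:
`p_i ≤ c < t_{i+1}` for some `0 ≤ i ≤ m`. -/
def visCut (m : ℕ) (p t : ℕ → ℕ) (c : ℕ) : Prop :=
  ∃ i, i ≤ m ∧ p i ≤ c ∧ c < t (i+1)

/-- `c` is an apparent cut of `D(P,T)`: `c` or `N−c` is a visible cut. -/
def appCut (N m : ℕ) (p t : ℕ → ℕ) (c : ℕ) : Prop :=
  visCut m p t c ∨ visCut m p t (N - c)

/-- `c` is a zero column of `D(P,T)`: `p_j < c < t_{j+1}` for some `j`. -/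
def zeroCol (m : ℕ) (p t : ℕ → ℕ) (c : ℕ) : Prop :=
  ∃ j, j ≤ m ∧ p j < c ∧ c < t (j+1)

/-- `(j,c)` is a lone star of `D(P,T)` with respect to the cut predicate `cut`. -/
def loneStar (m : ℕ) (p t : ℕ → ℕ) (cut : ℕ → Prop) (j c : ℕ) : Prop :=
  1 ≤ j ∧ j ≤ m ∧ t j ≤ c ∧ c ≤ p j ∧
    ((c = t j ∧ cut c) ∨ (c = p j ∧ cut (c-1)))

/-- `c ∈ 𝓛_{P,T}` : `c` is a zero column, or column `N+1−c` contains a lone star. -/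
def LSet (N m : ℕ) (p t : ℕ → ℕ) (cut : ℕ → Prop) (c : ℕ) : Prop :=
  1 ≤ c ∧ c ≤ N ∧
    (zeroCol m p t c ∨ ∃ j, loneStar m p t cut j (N+1-c))

/-- `[P] = P ∪ {N+1−p : p ∈ P}`. -/
def brP (N : ℕ) (P : Finset ℕ) : Finset ℕ := P ∪ P.image (fun p => N+1-p)

/-- The type-`D` type function `t(P) ∈ {0,1,2}`: if `n+1 ∈ [P]` it is the parity of
`#([1,n+1] \ P)`; otherwise it is `2`. -/
def tD (n : ℕ) (P : Finset ℕ) : ℕ :=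
  if (n+1) ∈ P ∨ (n+2) ∈ P then (Finset.Icc 1 (n+1) \ P).card % 2 else 2

/-- The type-`D` Bruhat order `T ⪯ P` on Schubert symbols for `OG(m, 2n+2)`. -/
def bruhatD (n m : ℕ) (t p : ℕ → ℕ) : Prop :=
  leS m t p ∧ ∀ c, 1 ≤ c → c ≤ n →
    Finset.Icc (c+1) (n+1) ⊆ brP (2*n+2) (symSet m p) →
    Finset.Icc (c+1) (n+1) ⊆ brP (2*n+2) (symSet m t) →
    ((symSet m p) ∩ Finset.Icc 1 c).card = ((symSet m t) ∩ Finset.Icc 1 c).card →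
    tD n (symSet m p) = tD n (symSet m t)

/-- The exceptional center cut `n+1` exists in `D(P,T)`:
`p_i = n+2 ≤ t_{i+1}` or `t_i = n+1 ≥ p_{i−1}` for some `i`. -/
def centerCut (n m : ℕ) (p t : ℕ → ℕ) : Prop :=
  ∃ i, 1 ≤ i ∧ i ≤ m ∧
    ((p i = n+2 ∧ n+2 ≤ t (i+1)) ∨ (t i = n+1 ∧ p (i-1) ≤ n+1))

/-- `c ∈ [1,n]` is a cut candidate of `D(P,T)`:
`[c+1,n+1] ⊆ [P] ∩ [T]` and `#(T ∩ [1,c]) = #(P ∩ [1,c]) + 1`. -/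
def cutCandidate (n m : ℕ) (p t : ℕ → ℕ) (c : ℕ) : Prop :=
  1 ≤ c ∧ c ≤ n ∧
  Finset.Icc (c+1) (n+1) ⊆ brP (2*n+2) (symSet m p) ∧
  Finset.Icc (c+1) (n+1) ⊆ brP (2*n+2) (symSet m t) ∧
  ((symSet m t) ∩ Finset.Icc 1 c).card = ((symSet m p) ∩ Finset.Icc 1 c).card + 1

/-- Exceptional cuts of `D(P,T)` in type `D`. -/
def excCut (n m : ℕ) (p t : ℕ → ℕ) (c : ℕ) : Prop :=
  (centerCut n m p t ∧ c = n+1) ∨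
  (tD n (symSet m t) ≠ tD n (symSet m p) ∧
    ∃ d, cutCandidate n m p t d ∧ (c = d ∨ c = 2*n+2 - d))

/-- The type-`D` cut set: apparent cuts together with exceptional cuts. -/
def cutD (n m : ℕ) (p t : ℕ → ℕ) (c : ℕ) : Prop :=
  appCut (2*n+2) m p t c ∨ excCut n m p t c

/-- The construction of the Schubert symbol `P'` from `T ⪯ P` in types `B` and `C`. -/
noncomputable def Pp (N m : ℕ) (p t : ℕ → ℕ) (i : ℕ) : ℕ :=
  if p i < t (i+1) then p i
  else if ¬ appCut N m p t (t (i+1) - 1) then t (i+1)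
  else ((Finset.Icc (t i) (t (i+1) - 1)).filter
        (fun c => ¬ LSet N m p t (appCut N m p t) c)).sup id

/-- The modified construction of the Schubert symbol `P̃` from `T ⪯ P` in type `D`. -/
noncomputable def Ptil (n m : ℕ) (p t : ℕ → ℕ) (i : ℕ) : ℕ :=
  if p i < t (i+1) then p i
  else if ¬ cutD n m p t (t (i+1) - 1) then
    (if t (i+1) = n+1 ∨ t (i+1) = n+2 then 2*n+3 - t (i+1) else t (i+1))
  else ((Finset.Icc (t i) (t (i+1) - 1)).filter
        (fun c => ¬ LSet (2*n+2) m p t (cutD n m p t) c)).sup id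

/-- A critical window `[c+1, N−c]` in `D(P,T)` (type `D`, defined when `t(T) ≠ t(P)`):
`c` and `N−c` are visible cuts and `[c+1,n+1] ⊆ [T] ∩ [P]`. -/
def critWindow (n m : ℕ) (p t : ℕ → ℕ) (c : ℕ) : Prop :=
  c ≤ n ∧ tD n (symSet m t) ≠ tD n (symSet m p) ∧
  visCut m p t c ∧ visCut m p t (2*n+2 - c) ∧
  Finset.Icc (c+1) (n+1) ⊆ brP (2*n+2) (symSet m t) ∧
  Finset.Icc (c+1) (n+1) ⊆ brP (2*n+2) (symSet m p)

/-- The quadratic form `f_c = x_1 x_N + … + x_c x_{N+1−c}`. -/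
noncomputable def fquad (N : ℕ) (c : ℕ) (x : ℕ → ℂ) : ℂ := ∑ i ∈ Finset.Icc 1 c, x i * x (N+1-i)

/-- The variety `Z_{P,T}` (affine cone) cut out by quadratic equations `f_c = 0`
for `c` in a prescribed set `Q` and linear equations `x_c = 0` for `c ∈ 𝓛_{P,T}`. -/
def Zvar (N m : ℕ) (p t : ℕ → ℕ) (Q : ℕ → Prop) (cut : ℕ → Prop) : Set (ℕ → ℂ) :=
  {x | (∀ c, Q c → fquad N c x = 0) ∧ ∀ c, LSet N m p t cut c → x c = 0}

/-!
Everything is read off the two counting functions `c ↦ #(T ∩ [1,c])` and `c ↦ #(P ∩ [1,c])`: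
`c` is a visible cut exactly when the first does not exceed the second, the centre cut and
the cut candidates are conditions on their difference near `n + 1`, and the type function
is the parity of the count at `n + 1`. Moving `c` by one changes each count by one or zero
according to whether `c + 1` lies in `T` or `P`, and isotropy forbids `x` and `N + 1 - x` from
lying in the same symbol. A lone star in column `t_j = y + 1` needs only that `y + 1 ∈ C`
implies `y ∈ C`, and one in column `p_j = y + 1` that `y ∈ C` implies `y + 1 ∈ C`; both are
checked cut type by cut type, and the symmetry `c ↦ N - c` of `C` turns them into the claims
about `c` and `c - 1`.
-/

open Finset

section Counting

variable {S : Finset ℕ} {c : ℕ}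

lemma card_inter_Icc_succ_of_mem (h : c + 1 ∈ S) :
    #(S ∩ Icc 1 (c + 1)) = #(S ∩ Icc 1 c) + 1 := by
  rw [← insert_Icc_right_eq_Icc_add_one (by omega), inter_insert_of_mem h,
    card_insert_of_notMem (by simp)]

lemma card_inter_Icc_succ_of_notMem (h : c + 1 ∉ S) :
    #(S ∩ Icc 1 (c + 1)) = #(S ∩ Icc 1 c) := by
  rw [← insert_Icc_right_eq_Icc_add_one (by omega), inter_insert_of_notMem h]

lemma card_inter_Icc_succ_le : #(S ∩ Icc 1 (c + 1)) ≤ #(S ∩ Icc 1 c) + 1 := by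
  by_cases h : c + 1 ∈ S
  · rw [card_inter_Icc_succ_of_mem h]
  · rw [card_inter_Icc_succ_of_notMem h]; omega

lemma card_inter_Icc_mono {d : ℕ} (h : c ≤ d) : #(S ∩ Icc 1 c) ≤ #(S ∩ Icc 1 d) :=
  card_le_card (inter_subset_inter_left (Icc_subset_Icc_right h))

lemma mem_brP_of_mem {N x : ℕ} (h : x ∈ S) : x ∈ brP N S := mem_union_left _ h

lemma reflect_mem_brP {N x : ℕ} (h : x ∈ S) : N + 1 - x ∈ brP N S :=
  mem_union_right _ (mem_image_of_mem _ h)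

lemma Icc_subset_of_mem_of_Icc_add_one_subset {a b : ℕ} (hab : a ≤ b) (ha : a ∈ S)
    (h : Icc (a + 1) b ⊆ S) : Icc a b ⊆ S := by
  rw [← insert_Icc_add_one_left_eq_Icc hab]
  exact insert_subset ha h

lemma mem_brP_iff {N x : ℕ} (h1 : 1 ≤ x) (h2 : x ≤ N + 1) :
    x ∈ brP N S ↔ x ∈ S ∨ N + 1 - x ∈ S := by
  simp only [brP, mem_union, mem_image]
  refine or_congr_right ⟨?_, fun h => ⟨N + 1 - x, h, by omega⟩⟩
  rintro ⟨y, hy, rfl⟩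
  rwa [show N + 1 - (N + 1 - y) = y by omega]

/-- `n + 1 + k` has the parity of `#([1,n+1] \ S) = n + 1 - k` and avoids truncated subtraction. -/
lemma tD_eq_of_mem_brP {n : ℕ} (h : n + 1 ∈ brP (2 * n + 2) S) :
    tD n S = (n + 1 + #(S ∩ Icc 1 (n + 1))) % 2 := by
  rw [mem_brP_iff (by omega) (by omega), show 2 * n + 2 + 1 - (n + 1) = n + 2 by omega] at h
  have hcard := card_sdiff_add_card_inter (Icc 1 (n + 1)) S
  rw [Nat.card_Icc, inter_comm] at hcard
  rw [tD, if_pos h]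
  omega

/-- `v ↦ min v (N + 1 - v)` is a bijection onto `[c+1, n+1]`: coverage gives surjectivity,
isotropy injectivity. -/
lemma card_inter_Icc_window {n : ℕ} (hiso : ∀ x ∈ S, ∀ y ∈ S, x + y ≠ 2 * n + 2 + 1)
    (hc : c ≤ n) (hcover : Icc (c + 1) (n + 1) ⊆ brP (2 * n + 2) S) :
    #(S ∩ Icc (c + 1) (2 * n + 2 - c)) = n + 1 - c := by
  rw [show n + 1 - c = #(Icc (c + 1) (n + 1)) by simp]
  refine card_nbij (fun v => min v (2 * n + 3 - v)) ?_ ?_ ?_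
  · intro v hv
    simp only [coe_inter, coe_Icc, Set.mem_inter_iff, mem_coe, Set.mem_Icc] at hv ⊢
    omega
  · intro x hx y hy hxy
    simp only [coe_inter, coe_Icc, Set.mem_inter_iff, mem_coe, Set.mem_Icc] at hx hy hxy
    have := hiso x hx.1 y hy.1
    omega
  · intro v hv
    simp only [coe_Icc, Set.mem_Icc] at hv
    simp only [Set.mem_image, coe_inter, coe_Icc, Set.mem_inter_iff, mem_coe, Set.mem_Icc]
    rcases (mem_brP_iff (by omega) (by omega)).mp (hcover (mem_Icc.mpr hv)) with hS | hS
    · exact ⟨v, ⟨hS, by omega, by omega⟩, by omega⟩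
    · exact ⟨2 * n + 3 - v, ⟨hS, by omega, by omega⟩, by omega⟩

lemma card_inter_Icc_reflect {n : ℕ} (hiso : ∀ x ∈ S, ∀ y ∈ S, x + y ≠ 2 * n + 2 + 1)
    (hc : c ≤ n) (hcover : Icc (c + 1) (n + 1) ⊆ brP (2 * n + 2) S) :
    #(S ∩ Icc 1 (2 * n + 2 - c)) = #(S ∩ Icc 1 c) + (n + 1 - c) := by
  have hsplit : Icc 1 (2 * n + 2 - c) = Icc 1 c ∪ Icc (c + 1) (2 * n + 2 - c) := by
    ext x; simp only [mem_Icc, mem_union]; omega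
  rw [hsplit, inter_union_distrib_left, card_union_of_disjoint,
    card_inter_Icc_window hiso hc hcover]
  exact disjoint_left.mpr fun x hx hx' => by
    simp only [mem_inter, mem_Icc] at hx hx'; omega

end Counting

section Symbols

variable {N m : ℕ} {s : ℕ → ℕ}

lemma mem_symSet {x : ℕ} : x ∈ symSet m s ↔ ∃ i, 1 ≤ i ∧ i ≤ m ∧ s i = x := by
  simp [symSet, and_assoc]

lemma apply_mem_symSet {i : ℕ} (h1 : 1 ≤ i) (h2 : i ≤ m) : s i ∈ symSet m s :=
  mem_symSet.mpr ⟨i, h1, h2, rfl⟩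

lemma card_symSet_inter_le (m : ℕ) (s : ℕ → ℕ) (X : Finset ℕ) :
    #(symSet m s ∩ X) ≤ m :=
  (card_le_card inter_subset_left).trans (card_image_le.trans (by simp))

namespace IsSSym

lemma strictMonoOn (hs : IsSSym N m s) : StrictMonoOn s (Set.Iic (m + 1)) :=
  fun i _ j hj hij => hs.mono i j hij hj

lemma le_of_mem (hs : IsSSym N m s) {x : ℕ} (hx : x ∈ symSet m s) : x ≤ N := by
  obtain ⟨i, hi1, hi2, rfl⟩ := mem_symSet.mp hx
  exact hs.ub i hi1 hi2

lemma add_ne (hs : IsSSym N m s) {x y : ℕ} (hx : x ∈ symSet m s) (hy : y ∈ symSet m s) :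
    x + y ≠ N + 1 := by
  obtain ⟨i, hi1, hi2, rfl⟩ := mem_symSet.mp hx
  obtain ⟨j, hj1, hj2, rfl⟩ := mem_symSet.mp hy
  exact hs.iso i j hi1 hi2 hj1 hj2

lemma le_card_inter_iff (hs : IsSSym N m s) {i c : ℕ} (hi : i ≤ m + 1) (hc : c ≤ N) :
    i ≤ #(symSet m s ∩ Icc 1 c) ↔ s i ≤ c := by
  have hmono {j k : ℕ} (hk : k ≤ m + 1) (hjk : j ≤ k) : s j ≤ s k :=
    hs.strictMonoOn.monotoneOn (Set.mem_Iic.mpr (by omega)) (Set.mem_Iic.mpr hk) hjk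
  constructor
  · intro h
    by_contra hlt
    have hi0 : i ≠ 0 := by rintro rfl; rw [hs.zero] at hlt; omega
    have hsub : symSet m s ∩ Icc 1 c ⊆ (Icc 1 (i - 1)).image s := by
      intro x hx
      rw [mem_inter, mem_Icc] at hx
      obtain ⟨j, hj1, hjm, rfl⟩ := mem_symSet.mp hx.1
      have hji : j < i := by
        by_contra hij
        have := hmono (j := i) (k := j) (by omega) (by omega)
        omega
      exact mem_image_of_mem s (mem_Icc.mpr ⟨hj1, by omega⟩)
    have := (card_le_card hsub).trans card_image_le
    rw [Nat.card_Icc] at this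
    omega
  · intro h
    have him : i ≤ m := by
      by_contra him
      rw [show i = m + 1 by omega, hs.top] at h
      omega
    have hsub : (Icc 1 i).image s ⊆ symSet m s ∩ Icc 1 c := by
      intro x hx
      obtain ⟨j, hj, rfl⟩ := mem_image.mp hx
      rw [mem_Icc] at hj
      have hpos := hs.mono 0 j (by omega) (by omega)
      have hji := hmono hi hj.2
      rw [hs.zero] at hpos
      exact mem_inter.mpr ⟨apply_mem_symSet hj.1 (by omega), mem_Icc.mpr ⟨hpos, by omega⟩⟩
    have hinj : Set.InjOn s (Icc 1 i) := hs.strictMonoOn.injOn.mono fun j hj =>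
      Set.mem_Iic.mpr ((mem_Icc.mp (mem_coe.mp hj)).2.trans (by omega))
    have := card_le_card hsub
    rwa [card_image_of_injOn hinj, Nat.card_Icc, Nat.add_sub_cancel] at this

end IsSSym

end Symbols

section Cuts

variable {n m : ℕ} {p t : ℕ → ℕ}

lemma visCut_iff {N c : ℕ} (hp : IsSSym N m p) (ht : IsSSym N m t) (hc : c ≤ N) :
    visCut m p t c ↔ #(symSet m t ∩ Icc 1 c) ≤ #(symSet m p ∩ Icc 1 c) := by
  constructor
  · rintro ⟨i, him, hpi, hti⟩
    have h1 := (hp.le_card_inter_iff (by omega) hc).mpr hpi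
    have h2 := mt (ht.le_card_inter_iff (i := i + 1) (by omega) hc).mp (by omega)
    omega
  · intro h
    have hm := card_symSet_inter_le m p (Icc 1 c)
    refine ⟨_, hm, (hp.le_card_inter_iff (by omega) hc).mp le_rfl, ?_⟩
    exact lt_of_not_ge (mt (ht.le_card_inter_iff (by omega) hc).mpr (by omega))

lemma centerCut_iff (hp : IsSSym (2 * n + 2) m p) (ht : IsSSym (2 * n + 2) m t) :
    centerCut n m p t ↔ (n + 2 ∈ symSet m p ∨ n + 1 ∈ symSet m t) ∧
      #(symSet m t ∩ Icc 1 (n + 1)) ≤ #(symSet m p ∩ Icc 1 (n + 1)) + 1 := by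
  have hcardP {i} (hi : i ≤ m + 1) := hp.le_card_inter_iff (c := n + 1) hi (by omega)
  have hcardT {i} (hi : i ≤ m + 1) := ht.le_card_inter_iff (c := n + 1) hi (by omega)
  constructor
  · rintro ⟨i, hi1, him, ⟨hpi, hti⟩ | ⟨hti, hpi⟩⟩
    · have hlt := hp.mono (i - 1) i (by omega) (by omega)
      have h1 := (hcardP (i := i - 1) (by omega)).mpr (by omega)
      have h2 := mt (hcardT (i := i + 1) (by omega)).mp (by omega)
      exact ⟨.inl (hpi ▸ apply_mem_symSet hi1 him), by omega⟩
    · have hlt := ht.mono i (i + 1) (by omega) (by omega)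
      have h1 := (hcardP (i := i - 1) (by omega)).mpr hpi
      have h2 := mt (hcardT (i := i + 1) (by omega)).mp (by omega)
      exact ⟨.inr (hti ▸ apply_mem_symSet hi1 him), by omega⟩
  · rintro ⟨hmem | hmem, hcard⟩
    · obtain ⟨i, hi1, him, hpi⟩ := mem_symSet.mp hmem
      have h1 := mt (hcardP (i := i) (by omega)).mp (by omega)
      have h2 := mt (hcardT (i := i + 1) (by omega)).mpr (by omega)
      exact ⟨i, hi1, him, .inl ⟨hpi, by omega⟩⟩
    · obtain ⟨i, hi1, him, hti⟩ := mem_symSet.mp hmem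
      have h1 := (hcardT (i := i) (by omega)).mpr hti.le
      have h2 := (hcardP (i := i - 1) (by omega)).mp (by omega)
      exact ⟨i, hi1, him, .inr ⟨hti, h2⟩⟩

lemma cutD_reflect {c : ℕ} (hc : c ≤ 2 * n + 2) (h : cutD n m p t c) :
    cutD n m p t (2 * n + 2 - c) := by
  rcases h with (h | h) | (⟨hcen, rfl⟩ | ⟨hmis, d, hcand, hd⟩)
  · exact .inl (.inr (by rwa [show 2 * n + 2 - (2 * n + 2 - c) = c by omega]))
  · exact .inl (.inl h)
  · exact .inr (.inl ⟨hcen, by omega⟩)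
  · have := hcand.2.1
    exact .inr (.inr ⟨hmis, d, hcand, by omega⟩)

lemma tD_ne_of_card_eq_succ {P T : Finset ℕ} (hP : n + 1 ∈ brP (2 * n + 2) P)
    (hT : n + 1 ∈ brP (2 * n + 2) T)
    (h : #(T ∩ Icc 1 (n + 1)) = #(P ∩ Icc 1 (n + 1)) + 1) : tD n T ≠ tD n P := by
  rw [tD_eq_of_mem_brP hP, tD_eq_of_mem_brP hT]
  omega

/-- The type condition of the Bruhat order, extended to `c = n + 1`. -/
lemma card_inter_ne_of_tD_ne (hb : bruhatD n m t p)
    (hmis : tD n (symSet m t) ≠ tD n (symSet m p)) {c : ℕ} (hc1 : 1 ≤ c) (hc : c ≤ n + 1)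
    (hP : Icc c (n + 1) ⊆ brP (2 * n + 2) (symSet m p))
    (hT : Icc c (n + 1) ⊆ brP (2 * n + 2) (symSet m t)) :
    #(symSet m p ∩ Icc 1 c) ≠ #(symSet m t ∩ Icc 1 c) := by
  intro heq
  rcases Nat.lt_or_ge c (n + 1) with hlt | hge
  · have hsub : Icc (c + 1) (n + 1) ⊆ Icc c (n + 1) := Icc_subset_Icc_left (by omega)
    exact hmis (hb.2 c hc1 (by omega) (hsub.trans hP) (hsub.trans hT) heq).symm
  · have hn : n + 1 ∈ Icc c (n + 1) := mem_Icc.mpr ⟨hc, le_rfl⟩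
    rw [show c = n + 1 by omega] at heq
    rw [tD_eq_of_mem_brP (hP hn), tD_eq_of_mem_brP (hT hn), heq] at hmis
    exact hmis rfl

lemma cutD_of_centerCut_of_mem_T (hp : IsSSym (2 * n + 2) m p) (ht : IsSSym (2 * n + 2) m t)
    (hT : n + 1 ∈ symSet m t) (hcen : centerCut n m p t) : cutD n m p t n := by
  have hcard := ((centerCut_iff hp ht).mp hcen).2
  rw [card_inter_Icc_succ_of_mem hT] at hcard
  by_cases hvis : #(symSet m t ∩ Icc 1 n) ≤ #(symSet m p ∩ Icc 1 n)
  · exact .inl (.inl ((visCut_iff hp ht (by omega)).mpr hvis))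
  have hP : n + 1 ∈ symSet m p := by
    by_contra hP
    rw [card_inter_Icc_succ_of_notMem hP] at hcard
    omega
  rw [card_inter_Icc_succ_of_mem hP] at hcard
  have hn : 1 ≤ n := by
    by_contra hn
    simp [show n = 0 by omega] at hvis
  refine .inr (.inr ⟨tD_ne_of_card_eq_succ (mem_brP_of_mem hP) (mem_brP_of_mem hT) ?_, n,
    ⟨hn, le_rfl, by simpa using mem_brP_of_mem hP, by simpa using mem_brP_of_mem hT, ?_⟩,
    .inl rfl⟩)
  · rw [card_inter_Icc_succ_of_mem hP, card_inter_Icc_succ_of_mem hT]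
    omega
  · omega

lemma cutD_of_cutCandidate_of_mem_T (hp : IsSSym (2 * n + 2) m p)
    (ht : IsSSym (2 * n + 2) m t) (hmis : tD n (symSet m t) ≠ tD n (symSet m p)) {y : ℕ}
    (hcand : cutCandidate n m p t (y + 1)) (hT : y + 1 ∈ symSet m t) : cutD n m p t y := by
  obtain ⟨-, hyn, hcoverP, hcoverT, hcard⟩ := hcand
  rw [card_inter_Icc_succ_of_mem hT] at hcard
  by_cases hP : y + 1 ∈ symSet m p
  · rw [card_inter_Icc_succ_of_mem hP] at hcard
    have hy : 1 ≤ y := by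
      by_contra hy
      simp [show y = 0 by omega] at hcard
    exact .inr (.inr ⟨hmis, y, ⟨hy, by omega,
      Icc_subset_of_mem_of_Icc_add_one_subset (by omega) (mem_brP_of_mem hP) hcoverP,
      Icc_subset_of_mem_of_Icc_add_one_subset (by omega) (mem_brP_of_mem hT) hcoverT, by omega⟩,
      .inl rfl⟩)
  · rw [card_inter_Icc_succ_of_notMem hP] at hcard
    exact .inl (.inl ((visCut_iff hp ht (by omega)).mpr (by omega)))

lemma cutD_of_cutCandidate_of_reflect_mem_T (hp : IsSSym (2 * n + 2) m p)
    (ht : IsSSym (2 * n + 2) m t) (hb : bruhatD n m t p)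
    (hmis : tD n (symSet m t) ≠ tD n (symSet m p)) {e : ℕ} (hcand : cutCandidate n m p t e)
    (hT : 2 * n + 2 - e ∈ symSet m t) : cutD n m p t (2 * n + 2 - (e + 1)) := by
  obtain ⟨he1, hen, hcoverP, hcoverT, hcard⟩ := hcand
  have hT' : e + 1 ∉ symSet m t := fun h => ht.add_ne h hT (by omega)
  rw [← card_inter_Icc_succ_of_notMem hT'] at hcard
  by_cases hP : e + 1 ∈ symSet m p
  · refine absurd ?_ (card_inter_ne_of_tD_ne hb hmis (by omega) (by omega) hcoverP hcoverT)
    rw [card_inter_Icc_succ_of_mem hP]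
    omega
  rw [← card_inter_Icc_succ_of_notMem hP] at hcard
  rcases Nat.lt_or_ge e n with hlt | hge
  · have hsub : Icc (e + 1 + 1) (n + 1) ⊆ Icc (e + 1) (n + 1) := Icc_subset_Icc_left (by omega)
    exact .inr (.inr ⟨hmis, e + 1,
      ⟨by omega, hlt, hsub.trans hcoverP, hsub.trans hcoverT, hcard⟩, .inr rfl⟩)
  · have hP' : n + 2 ∈ symSet m p := by
      have := hcoverP (mem_Icc.mpr ⟨le_rfl, by omega⟩)
      rw [mem_brP_iff (by omega) (by omega)] at this
      exact (show 2 * n + 2 + 1 - (e + 1) = n + 2 by omega) ▸ this.resolve_left hP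
    rw [show e = n by omega] at hcard
    exact .inr (.inl ⟨(centerCut_iff hp ht).mpr ⟨.inl hP', by omega⟩, by omega⟩)

lemma cutD_of_centerCut_of_mem_P (hp : IsSSym (2 * n + 2) m p) (ht : IsSSym (2 * n + 2) m t)
    (hP : n + 2 ∈ symSet m p) (hcen : centerCut n m p t) : cutD n m p t (n + 2) := by
  have hcard := ((centerCut_iff hp ht).mp hcen).2
  have hP' : n + 1 ∉ symSet m p := fun h => hp.add_ne h hP (by omega)
  rw [card_inter_Icc_succ_of_notMem hP'] at hcard
  by_cases hvis : #(symSet m t ∩ Icc 1 n) ≤ #(symSet m p ∩ Icc 1 n)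
  · rw [← visCut_iff hp ht (by omega), show n = 2 * n + 2 - (n + 2) by omega] at hvis
    exact .inl (.inr hvis)
  have hT' : n + 1 ∉ symSet m t := by
    intro hT'
    rw [card_inter_Icc_succ_of_mem hT'] at hcard
    omega
  rw [card_inter_Icc_succ_of_notMem hT'] at hcard
  have hn : 1 ≤ n := by
    by_contra hn
    simp [show n = 0 by omega] at hvis
  have hbrP : n + 1 ∈ brP (2 * n + 2) (symSet m p) :=
    (show 2 * n + 2 + 1 - (n + 2) = n + 1 by omega) ▸ reflect_mem_brP hP
  by_cases hT : n + 2 ∈ symSet m t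
  · have hbrT : n + 1 ∈ brP (2 * n + 2) (symSet m t) :=
      (show 2 * n + 2 + 1 - (n + 2) = n + 1 by omega) ▸ reflect_mem_brP hT
    refine .inr (.inr ⟨tD_ne_of_card_eq_succ hbrP hbrT ?_, n,
      ⟨hn, le_rfl, by simpa using hbrP, by simpa using hbrT, ?_⟩, .inr (by omega)⟩)
    · rw [card_inter_Icc_succ_of_notMem hP', card_inter_Icc_succ_of_notMem hT']
      omega
    · omega
  · refine .inl (.inl ((visCut_iff hp ht (by omega)).mpr ?_))
    rw [card_inter_Icc_succ_of_notMem hT, card_inter_Icc_succ_of_mem hP,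
      card_inter_Icc_succ_of_notMem hT', card_inter_Icc_succ_of_notMem hP']
    omega

lemma cutD_of_cutCandidate_of_mem_P (hp : IsSSym (2 * n + 2) m p)
    (ht : IsSSym (2 * n + 2) m t) (hmis : tD n (symSet m t) ≠ tD n (symSet m p)) {e : ℕ}
    (hcand : cutCandidate n m p t e) (hP : e + 1 ∈ symSet m p) : cutD n m p t (e + 1) := by
  obtain ⟨he1, hen, hcoverP, hcoverT, hcard⟩ := hcand
  have hPc := card_inter_Icc_succ_of_mem hP
  by_cases hT : e + 1 ∈ symSet m t
  · have hTc := card_inter_Icc_succ_of_mem hT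
    rcases Nat.lt_or_ge e n with hlt | hge
    · have hsub : Icc (e + 1 + 1) (n + 1) ⊆ Icc (e + 1) (n + 1) := Icc_subset_Icc_left (by omega)
      exact .inr (.inr ⟨hmis, e + 1, ⟨by omega, hlt, hsub.trans hcoverP, hsub.trans hcoverT,
        by omega⟩, .inl rfl⟩)
    · obtain rfl : e = n := by omega
      exact .inr (.inl ⟨(centerCut_iff hp ht).mpr ⟨.inr hT, by omega⟩, rfl⟩)
  · have hTc := card_inter_Icc_succ_of_notMem hT
    exact .inl (.inl ((visCut_iff hp ht (by omega)).mpr (by omega)))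

lemma cutD_of_cutCandidate_of_reflect_mem_P (hp : IsSSym (2 * n + 2) m p)
    (ht : IsSSym (2 * n + 2) m t) (hmis : tD n (symSet m t) ≠ tD n (symSet m p)) {e : ℕ}
    (hcand : cutCandidate n m p t (e + 1)) (hP : 2 * n + 2 - e ∈ symSet m p) :
    cutD n m p t (2 * n + 2 - e) := by
  obtain ⟨he1, hen, hcoverP, hcoverT, hcard⟩ := hcand
  have hP' : e + 1 ∉ symSet m p := fun h => hp.add_ne h hP (by omega)
  have hvis (h : #(symSet m t ∩ Icc 1 e) ≤ #(symSet m p ∩ Icc 1 e)) :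
      cutD n m p t (2 * n + 2 - e) := by
    rw [← visCut_iff hp ht (by omega), show e = 2 * n + 2 - (2 * n + 2 - e) by omega] at h
    exact .inl (.inr h)
  rw [card_inter_Icc_succ_of_notMem hP'] at hcard
  by_cases hT : e + 1 ∈ symSet m t
  · rw [card_inter_Icc_succ_of_mem hT] at hcard
    exact hvis (by omega)
  rw [card_inter_Icc_succ_of_notMem hT] at hcard
  by_cases hT' : 2 * n + 2 - e ∈ symSet m t
  · have hcover {S : Finset ℕ} (h : 2 * n + 2 - e ∈ S)
        (hsub : Icc (e + 1 + 1) (n + 1) ⊆ brP (2 * n + 2) S) :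
        Icc (e + 1) (n + 1) ⊆ brP (2 * n + 2) S :=
      Icc_subset_of_mem_of_Icc_add_one_subset (by omega)
        ((show 2 * n + 2 + 1 - (2 * n + 2 - e) = e + 1 by omega) ▸ reflect_mem_brP h) hsub
    have he : 1 ≤ e := by
      by_contra he
      simp [show e = 0 by omega] at hcard
    exact .inr (.inr ⟨hmis, e, ⟨he, by omega, hcover hP hcoverP, hcover hT' hcoverT, hcard⟩,
      .inr rfl⟩)
  · have hreflP := card_inter_Icc_reflect (fun _ hx _ hy => hp.add_ne hx hy) hen hcoverP
    have hreflT := card_inter_Icc_reflect (fun _ hx _ hy => ht.add_ne hx hy) hen hcoverT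
    refine .inl (.inl ((visCut_iff hp ht (by omega)).mpr ?_))
    rw [show 2 * n + 2 - e = 2 * n + 2 - (e + 1) + 1 by omega] at hP hT' ⊢
    rw [card_inter_Icc_succ_of_mem hP, card_inter_Icc_succ_of_notMem hT', hreflP, hreflT,
      card_inter_Icc_succ_of_notMem hP', card_inter_Icc_succ_of_notMem hT]
    omega

lemma cutD_of_cutD_add_one (hp : IsSSym (2 * n + 2) m p) (ht : IsSSym (2 * n + 2) m t)
    (hb : bruhatD n m t p) {y : ℕ} (hT : y + 1 ∈ symSet m t) (h : cutD n m p t (y + 1)) :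
    cutD n m p t y := by
  have hyN := ht.le_of_mem hT
  rcases h with (hvis | hvis) | (⟨hcen, hy⟩ | ⟨hmis, e, hcand, rfl | he⟩)
  · rw [visCut_iff hp ht hyN, card_inter_Icc_succ_of_mem hT] at hvis
    have := card_inter_Icc_succ_le (S := symSet m p) (c := y)
    exact .inl (.inl ((visCut_iff hp ht (by omega)).mpr (by omega)))
  · have hz : 2 * n + 2 - (y + 1) + 1 ∉ symSet m t := fun h => ht.add_ne hT h (by omega)
    rw [visCut_iff hp ht (by omega)] at hvis
    have := card_inter_Icc_succ_of_notMem hz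
    have := card_inter_Icc_mono (S := symSet m p) (Nat.le_add_right (2 * n + 2 - (y + 1)) 1)
    refine .inl (.inr ((visCut_iff hp ht (by omega)).mpr ?_))
    rw [show 2 * n + 2 - y = 2 * n + 2 - (y + 1) + 1 by omega]
    omega
  · obtain rfl : y = n := by omega
    exact cutD_of_centerCut_of_mem_T hp ht hT hcen
  · exact cutD_of_cutCandidate_of_mem_T hp ht hmis hcand hT
  · have := cutD_of_cutCandidate_of_reflect_mem_T hp ht hb hmis hcand (he ▸ hT)
    rwa [show 2 * n + 2 - (e + 1) = y by omega] at this

lemma cutD_add_one_of_cutD (hp : IsSSym (2 * n + 2) m p) (ht : IsSSym (2 * n + 2) m t)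
    {y : ℕ} (hP : y + 1 ∈ symSet m p) (h : cutD n m p t y) : cutD n m p t (y + 1) := by
  have hyN := hp.le_of_mem hP
  rcases h with (hvis | hvis) | (⟨hcen, rfl⟩ | ⟨hmis, e, hcand, rfl | rfl⟩)
  · rw [visCut_iff hp ht (by omega)] at hvis
    have := card_inter_Icc_succ_le (S := symSet m t) (c := y)
    have := card_inter_Icc_succ_of_mem hP
    exact .inl (.inl ((visCut_iff hp ht hyN).mpr (by omega)))
  · have hz : 2 * n + 2 - (y + 1) + 1 ∉ symSet m p := fun h => hp.add_ne hP h (by omega)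
    rw [visCut_iff hp ht (by omega), show 2 * n + 2 - y = 2 * n + 2 - (y + 1) + 1 by omega,
      card_inter_Icc_succ_of_notMem hz] at hvis
    have := card_inter_Icc_mono (S := symSet m t) (Nat.le_add_right (2 * n + 2 - (y + 1)) 1)
    exact .inl (.inr ((visCut_iff hp ht (by omega)).mpr (by omega)))
  · exact cutD_of_centerCut_of_mem_P hp ht hP hcen
  · exact cutD_of_cutCandidate_of_mem_P hp ht hmis hcand hP
  · have he1 := hcand.1
    have hen := hcand.2.1
    obtain ⟨f, rfl⟩ : ∃ f, e = f + 1 := ⟨e - 1, by omega⟩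
    have := cutD_of_cutCandidate_of_reflect_mem_P hp ht hmis hcand
      (by rwa [show 2 * n + 2 - (f + 1) + 1 = 2 * n + 2 - f by omega] at hP)
    rwa [show 2 * n + 2 - f = 2 * n + 2 - (f + 1) + 1 by omega] at this

end Cuts

/-- (type D) If `T ⪯ P` and `c ∈ 𝓛_{P,T}`, then both `c` and `c−1`
belong to the type-D cut set `𝓒_{P,T}` (including exceptional cuts). -/
theorem stmt_6 (n m : ℕ) (p t : ℕ → ℕ)
    (hp : IsSSym (2*n+2) m p) (ht : IsSSym (2*n+2) m t)
    (hb : bruhatD n m t p)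
    (c : ℕ) (hc : LSet (2*n+2) m p t (cutD n m p t) c) :
    cutD n m p t c ∧ cutD n m p t (c-1) := by
  obtain ⟨hc1, hcN, ⟨j, hjm, hpj, htj⟩ | ⟨j, hj1, hjm, -, -, hstar⟩⟩ := hc
  · exact ⟨.inl (.inl ⟨j, hjm, hpj.le, htj⟩), .inl (.inl ⟨j, hjm, by omega, by omega⟩)⟩
  -- the lone star sits in column `y + 1 = N + 1 - c`, so `c = N - y` and `c - 1 = N - (y + 1)`
  obtain ⟨y, hy⟩ : ∃ y, 2 * n + 2 + 1 - c = y + 1 := ⟨2 * n + 2 - c, by omega⟩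
  have hreflect {x : ℕ} (hx : x = c ∨ x = c - 1) (h : cutD n m p t (2 * n + 2 - x)) :
      cutD n m p t x := by
    simpa [show 2 * n + 2 - (2 * n + 2 - x) = x by omega] using cutD_reflect (by omega) h
  rw [hy] at hstar
  have hyc : 2 * n + 2 - c = y := by omega
  have hyc' : 2 * n + 2 - (c - 1) = y + 1 := by omega
  rcases hstar with ⟨hstar, hcut⟩ | ⟨hstar, hcut⟩
  · have hT : y + 1 ∈ symSet m t := hstar ▸ apply_mem_symSet hj1 hjm
    exact ⟨hreflect (.inl rfl) (hyc ▸ cutD_of_cutD_add_one hp ht hb hT hcut),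
      hreflect (.inr rfl) (hyc' ▸ hcut)⟩
  · have hP : y + 1 ∈ symSet m p := hstar ▸ apply_mem_symSet hj1 hjm
    exact ⟨hreflect (.inl rfl) (hyc ▸ hcut),
      hreflect (.inr rfl) (hyc' ▸ cutD_add_one_of_cutD hp ht hP hcut)⟩
end

section
/- Let T ⪯ P be Schubert symbols of size m in [1,N] for a type B or C Grassmannian, and define P' = {p'_1, …, p'_m} by: p'_i = p_i if p_i < t_{i+1}; p'_i = t_{i+1} if p_i ≥ t_{i+1} and t_{i+1}−1 ∉ C_{P,T}; and p'_i = max{c ∈ [t_i, t_{i+1}−1] : c ∉ L_{P,T}} if p_i ≥ t_{i+1} and t_{i+1}−1 ∈ C_{P,T}. Then P' is a Schubert symbol: its elements are m distinct integers p'_1 < … < p'_m, and p'_i + p'_j ≠ N+1 for all i, j. -/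
open scoped Classical

/-!
Every `p'_i` avoids `𝓛_{P,T}`: neither `t_i` nor `p_i` lies in `𝓛`, and in the third case the
maximum runs over columns outside `𝓛`. Moreover `p'_i` is an apparent cut, unless
`p'_i = t_{i+1}` and `t_{i+1} - 1` is not a cut; in the third case this is because a column of `𝓛`
is preceded by a cut. Since `t_i ≤ p'_i ≤ t_{i+1}`, the only possible failure of strict
monotonicity is `p'_i = t_{i+1} = p'_{i+1}`, which is excluded because a cut at
`t_{i+1} < p_{i+1}` forces a cut at `t_{i+1} - 1`. If `p'_i + p'_j = N + 1` with both cuts, the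
symmetry `c ↦ N - c` of apparent cuts makes `p'_j - 1` and `p'_j` both cuts, which puts `p'_j` or
`N + 1 - p'_j = p'_i` into `𝓛`; the other cases contradict the isotropy of `T` or the case
distinction itself.
-/

namespace IsSSym

variable {N m : ℕ} {p : ℕ → ℕ} {i j : ℕ}

lemma le_of_le (h : IsSSym N m p) (hij : i ≤ j) (hj : j ≤ m + 1) : p i ≤ p j := by
  rcases hij.lt_or_eq with hlt | rfl
  · exact (h.mono i j hlt hj).le
  · exact le_rfl

lemma lt_of_apply_lt (h : IsSSym N m p) (hi : i ≤ m + 1) (hlt : p i < p j) : i < j := by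
  by_contra! hji
  exact absurd (h.le_of_le hji hi) (not_le.mpr hlt)

lemma one_le_apply (h : IsSSym N m p) (hj : 1 ≤ j) (hjm : j ≤ m + 1) : 1 ≤ p j := by
  have := h.mono 0 j hj hjm
  rwa [h.zero] at this

lemma add_ne_of_le_succ (h : IsSSym N m p) (hi : 1 ≤ i) (him : i ≤ m + 1)
    (hj : 1 ≤ j) (hjm : j ≤ m + 1) : p i + p j ≠ N + 1 := by
  have hpi := h.one_le_apply hi him
  have hpj := h.one_le_apply hj hjm
  rcases him.lt_or_eq with him | rfl
  · rcases hjm.lt_or_eq with hjm | rfl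
    · exact h.iso i j hi (by omega) hj (by omega)
    · rw [h.top]; omega
  · rw [h.top]; omega

end IsSSym

section Diagram

variable {N m : ℕ} {p t : ℕ → ℕ} {j c : ℕ}

lemma visCut_sub_one (hv : visCut m p t c) (hp : ∀ k ≤ m, p k ≠ c) :
    visCut m p t (c - 1) := by
  obtain ⟨k, hk, hpk, hct⟩ := hv
  exact ⟨k, hk, by have := hp k hk; omega, by omega⟩

lemma visCut_add_one (hv : visCut m p t c) (ht : ∀ k ≤ m, t (k + 1) ≠ c + 1) :
    visCut m p t (c + 1) := by
  obtain ⟨k, hk, hpk, hct⟩ := hv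
  exact ⟨k, hk, by omega, by have := ht k hk; omega⟩

lemma appCut_sub_iff (hc : c ≤ N) : appCut N m p t (N - c) ↔ appCut N m p t c := by
  rw [appCut, appCut, Nat.sub_sub_self hc, or_comm]

-- Row `j` of the diagram `D(P,T)` carries its stars in the columns `c` with `t j ≤ c ≤ p j`.

lemma index_eq_of_mem_row (hp : IsSSym N m p) (ht : IsSSym N m t) {k : ℕ} (hk : k ≤ m)
    (hpk : p k ≤ c) (hct : c < t (k + 1)) (hjm : j ≤ m) (htc : t j ≤ c) (hcp : c ≤ p j) :
    k = j := by
  have hjk : j < k + 1 := ht.lt_of_apply_lt (by omega) (by omega)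
  have hkj : ¬ j < k := fun hjk => absurd (hp.mono j k hjk (by omega)) (by omega)
  omega

lemma not_zeroCol_of_mem_row (hp : IsSSym N m p) (ht : IsSSym N m t)
    (hjm : j ≤ m) (htc : t j ≤ c) (hcp : c ≤ p j) : ¬ zeroCol m p t c := by
  rintro ⟨k, hk, hpk, hct⟩
  obtain rfl := index_eq_of_mem_row hp ht hk hpk.le hct hjm htc hcp
  omega

lemma eq_of_visCut_of_mem_row (hp : IsSSym N m p) (ht : IsSSym N m t)
    (hjm : j ≤ m) (htc : t j ≤ c) (hcp : c ≤ p j) (hv : visCut m p t c) : c = p j := by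
  obtain ⟨k, hk, hpk, hct⟩ := hv
  obtain rfl := index_eq_of_mem_row hp ht hk hpk hct hjm htc hcp
  omega

lemma eq_of_visCut_sub_one_of_mem_row (hp : IsSSym N m p) (ht : IsSSym N m t)
    (hj : 1 ≤ j) (hjm : j ≤ m) (htc : t j ≤ c) (hcp : c ≤ p j)
    (hv : visCut m p t (c - 1)) : c = t j := by
  obtain ⟨k, hk, hpk, hct⟩ := hv
  have htj := ht.one_le_apply hj (by omega)
  have hkj : k < j := hp.lt_of_apply_lt (by omega) (by omega)
  have hjk : ¬ k + 1 < j := fun hkj => absurd (ht.mono (k + 1) j hkj (by omega)) (by omega)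
  obtain rfl : k + 1 = j := by omega
  omega

end Diagram

section LoneStars

variable {N m : ℕ} {p t : ℕ → ℕ} {i j c : ℕ}

lemma loneStar_compl_of_mem_row (hp : IsSSym N m p) (ht : IsSSym N m t)
    (hi : 1 ≤ i) (him : i ≤ m) (htc : t i ≤ c) (hcp : c ≤ p i) (hcN : c ≤ N)
    (hs : loneStar m p t (appCut N m p t) j (N + 1 - c)) :
    (t j = N + 1 - c ∧ p j = N + 1 - c) ∨ (t i = c ∧ t j = N + 1 - c) ∨
      (p i = c ∧ p j = N + 1 - c) := by
  obtain ⟨hj, hjm, htd, hdp, ⟨hdt, hv | hv⟩ | ⟨hdp', hv | hv⟩⟩ := hs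
  · exact Or.inl ⟨hdt.symm, (eq_of_visCut_of_mem_row hp ht hjm htd hdp hv).symm⟩
  · have htc1 := ht.one_le_apply hi (by omega)
    rw [show N - (N + 1 - c) = c - 1 by omega] at hv
    exact Or.inr (Or.inl ⟨(eq_of_visCut_sub_one_of_mem_row hp ht hi him htc hcp hv).symm,
      hdt.symm⟩)
  · exact Or.inl ⟨(eq_of_visCut_sub_one_of_mem_row hp ht hj hjm htd hdp hv).symm, hdp'.symm⟩
  · rw [show N - (N + 1 - c - 1) = c by omega] at hv
    exact Or.inr (Or.inr ⟨(eq_of_visCut_of_mem_row hp ht him htc hcp hv).symm, hdp'.symm⟩)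

lemma not_LSet_of_eq_t_or_p (hp : IsSSym N m p) (ht : IsSSym N m t) (hle : leS m t p)
    (hi : 1 ≤ i) (him : i ≤ m) (hc : c = t i ∨ c = p i) :
    ¬ LSet N m p t (appCut N m p t) c := by
  have hti := hle i hi him
  rintro ⟨-, hcN, hz | ⟨j, hs⟩⟩
  · exact not_zeroCol_of_mem_row hp ht him (by omega) (by omega) hz
  · have hj := hs.1
    have hjm := hs.2.1
    have htt := ht.iso i j hi him hj hjm
    have hpp := hp.iso i j hi him hj hjm
    rcases loneStar_compl_of_mem_row hp ht hi him (by omega) (by omega) hcN hs with h | h | h <;>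
      omega

lemma appCut_of_zeroCol (h : zeroCol m p t c) :
    appCut N m p t c ∧ appCut N m p t (c - 1) := by
  obtain ⟨k, hk, hpk, hct⟩ := h
  exact ⟨Or.inl ⟨k, hk, hpk.le, hct⟩, Or.inl ⟨k, hk, by omega, by omega⟩⟩

lemma appCut_of_loneStar_t (hp : IsSSym N m p) (ht : IsSSym N m t)
    (hj : 1 ≤ j) (hjm : j ≤ m) (htp : t j ≤ p j) (hc : 1 ≤ c) (hcN : c ≤ N)
    (hdt : t j = N + 1 - c) (hC : appCut N m p t (t j)) :
    appCut N m p t c ∧ appCut N m p t (c - 1) := by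
  refine ⟨?_, (appCut_sub_iff (by omega)).mp (by rwa [show N - (c - 1) = t j by omega])⟩
  rcases hC with hv | hv
  · have hpt := eq_of_visCut_of_mem_row hp ht hjm le_rfl htp hv
    have hp1 := hp.mono (j - 1) j (by omega) (by omega)
    exact Or.inr ⟨j - 1, by omega, by omega, by rw [Nat.sub_add_cancel hj]; omega⟩
  · rw [show N - t j = c - 1 by omega] at hv
    refine Or.inl (Nat.sub_add_cancel hc ▸ visCut_add_one hv fun k hk => ?_)
    have := ht.add_ne_of_le_succ (i := k + 1) (by omega) (by omega) hj (by omega)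
    omega

lemma appCut_of_loneStar_p (hp : IsSSym N m p) (ht : IsSSym N m t)
    (hj : 1 ≤ j) (hjm : j ≤ m) (htp : t j ≤ p j) (hc : 1 ≤ c) (hcN : c ≤ N)
    (hdp : p j = N + 1 - c) (hC : appCut N m p t (p j - 1)) :
    appCut N m p t c ∧ appCut N m p t (c - 1) := by
  refine ⟨(appCut_sub_iff hcN).mp (by rwa [show N - c = p j - 1 by omega]), ?_⟩
  rcases hC with hv | hv
  · have htp' := eq_of_visCut_sub_one_of_mem_row hp ht hj hjm htp le_rfl hv
    have ht1 := ht.mono j (j + 1) (by omega) (by omega)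
    exact Or.inr ⟨j, hjm, by omega, by omega⟩
  · rw [show N - (p j - 1) = c by omega] at hv
    refine Or.inl (visCut_sub_one hv fun k hk => ?_)
    rcases Nat.eq_zero_or_pos k with rfl | hk0
    · rw [hp.zero]; omega
    · have := hp.iso k j hk0 hk hj hjm
      omega

lemma appCut_of_LSet (hp : IsSSym N m p) (ht : IsSSym N m t)
    (hL : LSet N m p t (appCut N m p t) c) :
    appCut N m p t c ∧ appCut N m p t (c - 1) := by
  obtain ⟨hc, hcN, hz | ⟨j, hj, hjm, htd, hdp, ⟨hdt, hC⟩ | ⟨hdp', hC⟩⟩⟩ := hL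
  · exact appCut_of_zeroCol hz
  · exact appCut_of_loneStar_t hp ht hj hjm (by omega) hc hcN hdt.symm (hdt ▸ hC)
  · exact appCut_of_loneStar_p hp ht hj hjm (by omega) hc hcN hdp'.symm (hdp' ▸ hC)

lemma LSet_or_LSet_compl_of_appCut (hp : IsSSym N m p) (ht : IsSSym N m t) (hle : leS m t p)
    (hc : 1 ≤ c) (hcN : c ≤ N) (hC : appCut N m p t c) (hC1 : appCut N m p t (c - 1)) :
    LSet N m p t (appCut N m p t) c ∨ LSet N m p t (appCut N m p t) (N + 1 - c) := by
  rcases hC with ⟨k, hk, hpk, hct⟩ | ⟨k, hk, hpk, hct⟩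
  · rcases hpk.lt_or_eq with hpk | hpk
    · exact Or.inl ⟨hc, hcN, Or.inl ⟨k, hk, hpk, hct⟩⟩
    · have hk1 : 1 ≤ k := Nat.pos_of_ne_zero fun hk0 => by subst hk0; rw [hp.zero] at hpk; omega
      refine Or.inr ⟨by omega, by omega, Or.inr ⟨k, ?_⟩⟩
      rw [show N + 1 - (N + 1 - c) = c by omega]
      exact ⟨hk1, hk, hpk ▸ hle k hk1 hk, hpk.ge, Or.inr ⟨hpk.symm, hC1⟩⟩
  · rcases (show N + 1 - c ≤ t (k + 1) by omega).lt_or_eq with hct' | htk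
    · exact Or.inr ⟨by omega, by omega, Or.inl ⟨k, hk, by omega, hct'⟩⟩
    · have hk1 : k + 1 ≤ m := by
        by_contra hkm
        rw [show k = m by omega, ht.top] at htk
        omega
      have hC' : appCut N m p t (N + 1 - c) :=
        (appCut_sub_iff (by omega)).mp (by rwa [show N - (N + 1 - c) = c - 1 by omega])
      refine Or.inl ⟨hc, hcN, Or.inr ⟨k + 1, le_add_self, hk1, htk ▸ le_rfl,
        htk ▸ hle (k + 1) le_add_self hk1, Or.inl ⟨htk, hC'⟩⟩⟩

end LoneStars

section Construction

variable {N m : ℕ} {p t : ℕ → ℕ} {i j : ℕ}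

lemma Pp_of_appCut (hp : IsSSym N m p) (ht : IsSSym N m t) (hle : leS m t p)
    (hi : 1 ≤ i) (him : i ≤ m) (hpt : t (i + 1) ≤ p i) (hC : appCut N m p t (t (i + 1) - 1)) :
    t i ≤ Pp N m p t i ∧ Pp N m p t i < t (i + 1) ∧
      ¬ LSet N m p t (appCut N m p t) (Pp N m p t i) ∧ appCut N m p t (Pp N m p t i) := by
  set S := (Finset.Icc (t i) (t (i + 1) - 1)).filter
    (fun c => ¬ LSet N m p t (appCut N m p t) c)
  have hPp : Pp N m p t i = S.sup id := by
    rw [Pp, if_neg (by omega), if_neg (not_not.mpr hC)]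
  have htt := ht.mono i (i + 1) (by omega) (by omega)
  have htS : t i ∈ S := Finset.mem_filter.mpr
    ⟨Finset.mem_Icc.mpr ⟨le_rfl, by omega⟩, not_LSet_of_eq_t_or_p hp ht hle hi him (.inl rfl)⟩
  obtain ⟨b, hbS, hb⟩ := Finset.exists_mem_eq_sup S ⟨_, htS⟩ id
  obtain ⟨hbI, hbL⟩ := Finset.mem_filter.mp hbS
  obtain ⟨hb1, hb2⟩ := Finset.mem_Icc.mp hbI
  rw [hPp, hb, id]
  refine ⟨hb1, by omega, hbL, ?_⟩
  rcases hb2.lt_or_eq with hb2 | rfl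
  · -- `b + 1` lies in `𝓛` by maximality of `b`, and a column of `𝓛` is preceded by a cut.
    have hL : LSet N m p t (appCut N m p t) (b + 1) := by
      by_contra hL
      have := Finset.le_sup (f := id)
        (Finset.mem_filter.mpr ⟨Finset.mem_Icc.mpr ⟨by omega, by omega⟩, hL⟩ : b + 1 ∈ S)
      rw [hb, id, id] at this
      omega
    exact (appCut_of_LSet hp ht hL).2
  · exact hC

lemma Pp_spec (hp : IsSSym N m p) (ht : IsSSym N m t) (hle : leS m t p)
    (hi : 1 ≤ i) (him : i ≤ m) :
    t i ≤ Pp N m p t i ∧ ¬ LSet N m p t (appCut N m p t) (Pp N m p t i) ∧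
      ((Pp N m p t i < t (i + 1) ∧ appCut N m p t (Pp N m p t i)) ∨
        (Pp N m p t i = t (i + 1) ∧ t (i + 1) ≤ p i ∧ ¬ appCut N m p t (t (i + 1) - 1))) := by
  by_cases hpt : p i < t (i + 1)
  · rw [Pp, if_pos hpt]
    exact ⟨hle i hi him, not_LSet_of_eq_t_or_p hp ht hle hi him (.inr rfl),
      .inl ⟨hpt, .inl ⟨i, him, le_rfl, hpt⟩⟩⟩
  by_cases hC : appCut N m p t (t (i + 1) - 1)
  · obtain ⟨h1, h2, h3, h4⟩ := Pp_of_appCut hp ht hle hi him (by omega) hC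
    exact ⟨h1, h3, .inl ⟨h2, h4⟩⟩
  rw [Pp, if_neg hpt, if_pos hC]
  refine ⟨(ht.mono i (i + 1) (by omega) (by omega)).le, ?_, .inr ⟨rfl, by omega, hC⟩⟩
  rcases him.lt_or_eq with him | rfl
  · exact not_LSet_of_eq_t_or_p hp ht hle (by omega) him (.inl rfl)
  · rw [ht.top]
    exact fun hL => absurd hL.2.1 (by omega)

lemma appCut_t_sub_one (hp : IsSSym N m p) (ht : IsSSym N m t)
    (hj : 1 ≤ j) (hjm : j ≤ m) (htp : t j < p j) (hC : appCut N m p t (t j)) :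
    appCut N m p t (t j - 1) := by
  have htj_pos := ht.one_le_apply hj (by omega)
  have htN := ht.ub j hj hjm
  rcases hC with hv | hv
  · exact absurd (eq_of_visCut_of_mem_row hp ht hjm le_rfl htp.le hv) htp.ne
  · refine Or.inr ?_
    rw [show N - (t j - 1) = N - t j + 1 by omega]
    refine visCut_add_one hv fun k hk => ?_
    have := ht.add_ne_of_le_succ (i := k + 1) (by omega) (by omega) hj (by omega)
    omega

lemma Pp_lt_Pp (hp : IsSSym N m p) (ht : IsSSym N m t) (hle : leS m t p)
    (hi : 1 ≤ i) (hij : i < j) (hjm : j ≤ m) : Pp N m p t i < Pp N m p t j := by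
  obtain ⟨-, -, ⟨hlt, -⟩ | ⟨hPi, hpi, hnC⟩⟩ := Pp_spec hp ht hle hi (by omega)
  · have := ht.le_of_le (show i + 1 ≤ j by omega) (by omega)
    have := (Pp_spec hp ht hle (by omega) hjm).1
    omega
  by_contra! hge
  have htij := ht.le_of_le (show i + 1 ≤ j by omega) (by omega)
  obtain ⟨htj, -, ⟨-, hCj⟩ | ⟨hPj, -⟩⟩ := Pp_spec hp ht hle (by omega) hjm
  · have hPj : Pp N m p t j = t j := by omega
    have hpij := hp.mono i j hij (by omega)
    exact hnC (by
      rw [show t (i + 1) = t j by omega]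
      exact appCut_t_sub_one hp ht (by omega) hjm (by omega) (hPj ▸ hCj))
  · have := ht.mono j (j + 1) (by omega) (by omega)
    omega

lemma Pp_add_Pp_ne (hp : IsSSym N m p) (ht : IsSSym N m t) (hle : leS m t p)
    (hi : 1 ≤ i) (him : i ≤ m) (hj : 1 ≤ j) (hjm : j ≤ m) :
    Pp N m p t i + Pp N m p t j ≠ N + 1 := by
  intro hsum
  have hti1 := ht.le_of_le (show i + 1 ≤ m + 1 by omega) le_rfl
  have htj1 := ht.le_of_le (show j + 1 ≤ m + 1 by omega) le_rfl
  have htj_pos := ht.one_le_apply hj (by omega)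
  rw [ht.top] at hti1 htj1
  obtain ⟨-, hLi, ⟨hlti, hCi⟩ | ⟨hPi, -, hnCi⟩⟩ := Pp_spec hp ht hle hi him <;>
  obtain ⟨htj, hLj, ⟨hltj, hCj⟩ | ⟨hPj, -, hnCj⟩⟩ := Pp_spec hp ht hle hj hjm
  · have hCj1 : appCut N m p t (Pp N m p t j - 1) := by
      rw [show Pp N m p t j - 1 = N - Pp N m p t i by omega]
      exact (appCut_sub_iff (by omega)).mpr hCi
    rcases LSet_or_LSet_compl_of_appCut hp ht hle (by omega) (by omega) hCj hCj1 with hL | hL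
    · exact hLj hL
    · exact hLi (by rwa [show N + 1 - Pp N m p t j = Pp N m p t i by omega] at hL)
  · exact hnCj (by
      rw [show t (j + 1) - 1 = N - Pp N m p t i by omega]
      exact (appCut_sub_iff (by omega)).mpr hCi)
  · exact hnCi (by
      rw [show t (i + 1) - 1 = N - Pp N m p t j by omega]
      exact (appCut_sub_iff (by omega)).mpr hCj)
  · exact ht.add_ne_of_le_succ (i := i + 1) (j := j + 1) (by omega) (by omega) (by omega)
      (by omega) (by omega)

end Construction

/-- (types B/C) The set `P'` constructed from `T ⪯ P` is a Schubert
symbol: its elements `p'_1 < … < p'_m` are distinct and no two of them sum to `N+1`. -/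
theorem stmt_10 (N m : ℕ) (p t : ℕ → ℕ)
    (hp : IsSSym N m p) (ht : IsSSym N m t) (hle : leS m t p) :
    (∀ i j, 1 ≤ i → i < j → j ≤ m → Pp N m p t i < Pp N m p t j) ∧
    (∀ i j, 1 ≤ i → i ≤ m → 1 ≤ j → j ≤ m →
      Pp N m p t i + Pp N m p t j ≠ N+1) :=
  ⟨fun _ _ hi hij hjm => Pp_lt_Pp hp ht hle hi hij hjm,
    fun _ _ hi him hj hjm => Pp_add_Pp_ne hp ht hle hi him hj hjm⟩
end
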